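/- Let λ > 0 with λ ≠ 1, φ real, and set λ₁ = λe^{iφ}, λ₂ = e^{-2iφ}, λ₃ = λ⁻¹e^{iφ}. Then the determinant of the 3×3 matrix with rows (1,1,1), (λ₁,λ₂,λ₃), (conj(λ₃),conj(λ₂),conj(λ₁)) equals (λ⁻² - λ²) + 2(λ - λ⁻¹)cos(3φ) and is nonzero. -/

import Mathlib

/-!
Put `e = exp (iφ)`, so that `conj e = e⁻¹` and every entry is a monomial in `λ^{±1}` and
`e^{±1}`. Expanding, the determinant is `(λ⁻² - λ²) + (λ - λ⁻¹)(e³ + e⁻³)` with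
`e³ + e⁻³ = 2 cos 3φ`. This factors as `(λ - λ⁻¹)(2 cos 3φ - (λ + λ⁻¹))`, and both factors are
nonzero because `λ + λ⁻¹ > 2 ≥ 2 cos 3φ` for `0 < λ ≠ 1`.
-/

open Real Complex Matrix
open scoped ComplexConjugate

theorem det_fin_three_eigenvalue_matrix {K : Type*} [Field K] (a e : K) (he : e ≠ 0) :
    (!![1, 1, 1; a * e, (e ^ 2)⁻¹, a⁻¹ * e; a⁻¹ * e⁻¹, e ^ 2, a * e⁻¹] : Matrix (Fin 3) (Fin 3) K).det =
      (a⁻¹ ^ 2 - a ^ 2) + (a - a⁻¹) * (e ^ 3 + (e ^ 3)⁻¹) := by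
  simp only [det_fin_three, of_apply, cons_val', cons_val_zero, cons_val_one, cons_val_two,
    empty_val', cons_val_fin_one, tail_cons, vecHead]
  field_simp
  ring

theorem exp_pow_add_inv_eq_two_cos (φ : ℝ) (n : ℕ) :
    cexp (I * φ) ^ n + (cexp (I * φ) ^ n)⁻¹ = 2 * (Real.cos (n * φ) : ℂ) := by
  rw [← Complex.exp_nat_mul, ← Complex.exp_neg, ofReal_cos, two_cos]
  push_cast
  ring_nf

theorem conj_exp_I_mul (φ : ℝ) : conj (cexp (I * φ)) = (cexp (I * φ))⁻¹ := by
  rw [← Complex.exp_conj, ← Complex.exp_neg, map_mul, conj_I, conj_ofReal, neg_mul]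

theorem two_lt_add_inv {x : ℝ} (hx : 0 < x) (hx1 : x ≠ 1) : 2 < x + x⁻¹ := by
  have : 0 < (x - 1) ^ 2 / x := by have := sub_ne_zero.mpr hx1; positivity
  have : x + x⁻¹ - 2 = (x - 1) ^ 2 / x := by field_simp; ring
  linarith

theorem inv_sq_sub_sq_add_mul_ne_zero {x c : ℝ} (hx : 0 < x) (hx1 : x ≠ 1) (hc : |c| ≤ 1) :
    (x⁻¹ ^ 2 - x ^ 2) + 2 * (x - x⁻¹) * c ≠ 0 := by
  have hfac : (x⁻¹ ^ 2 - x ^ 2) + 2 * (x - x⁻¹) * c = (x - x⁻¹) * (2 * c - (x + x⁻¹)) := by ring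
  have hsub : x - x⁻¹ ≠ 0 := by
    have : x - x⁻¹ = (x - 1) * (x + 1) / x := by field_simp; ring
    rw [this]
    exact div_ne_zero (mul_ne_zero (sub_ne_zero.mpr hx1) (by positivity)) hx.ne'
  rw [hfac]
  exact mul_ne_zero hsub (by linarith [two_lt_add_inv hx hx1, (abs_le.mp hc).2])

theorem stmt_7 (lam φ : ℝ) (hlam : 0 < lam) (hlam1 : lam ≠ 1)
    (l1 l2 l3 : ℂ)
    (h1 : l1 = (lam : ℂ) * Complex.exp (Complex.I * φ))
    (h2 : l2 = Complex.exp (-2 * Complex.I * φ))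
    (h3 : l3 = (lam : ℂ)⁻¹ * Complex.exp (Complex.I * φ)) :
    (!![1, 1, 1; l1, l2, l3;
        (starRingEnd ℂ) l3, (starRingEnd ℂ) l2, (starRingEnd ℂ) l1] : Matrix (Fin 3) (Fin 3) ℂ).det =
      ((lam⁻¹ ^ 2 - lam ^ 2 : ℝ) : ℂ) + 2 * ((lam - lam⁻¹ : ℝ) : ℂ) * (Real.cos (3 * φ) : ℂ) ∧
    (!![1, 1, 1; l1, l2, l3;
        (starRingEnd ℂ) l3, (starRingEnd ℂ) l2, (starRingEnd ℂ) l1] : Matrix (Fin 3) (Fin 3) ℂ).det ≠ 0 := by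
  set e := cexp (I * φ)
  have hl2 : l2 = (e ^ 2)⁻¹ := by
    rw [h2, ← Complex.exp_nat_mul, ← Complex.exp_neg]
    ring_nf
  have hconj_e : conj e = e⁻¹ := conj_exp_I_mul φ
  have hdet : (!![1, 1, 1; l1, l2, l3; conj l3, conj l2, conj l1] : Matrix (Fin 3) (Fin 3) ℂ).det =
      ((lam⁻¹ ^ 2 - lam ^ 2 : ℝ) : ℂ) + 2 * ((lam - lam⁻¹ : ℝ) : ℂ) * (Real.cos (3 * φ) : ℂ) := by
    simp only [h1, hl2, h3, map_mul, map_inv₀, map_pow, conj_ofReal, hconj_e, inv_pow, inv_inv]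
    rw [det_fin_three_eigenvalue_matrix _ e (Complex.exp_ne_zero _), exp_pow_add_inv_eq_two_cos]
    push_cast
    ring
  refine ⟨hdet, hdet ▸ ?_⟩
  exact_mod_cast inv_sq_sub_sq_add_mul_ne_zero hlam hlam1 (abs_cos_le_one _)
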